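/- arXiv:math/0611813 — 7 statements merged into one kernel-verified Lean document; each statement's English description precedes it below -/
import Mathlib

section
/- Let q > 1 and n_1,…,n_m be positive integers with n = ∑ n_i, and let b_j (0 ≤ j ≤ n) be the integers defined by b_j = q^j + ∑_{i=1}^j (−1)^i ∑_{1 ≤ m_1<…<m_i ≤ m, ∑ n_{m_l} ≤ j} q^{j−∑ n_{m_l}}, and set b̂_j = ∑_{i=0}^{j} b_i (with b̂_{−1} = 0). If n_1 = 1, then b̂_j^{(n_1,…,n_m)} = b_j^{(n_2,…,n_m)} for all j, where b_j^{(n_2,…,n_m)} is defined by the analogous formula for the tuple (n_2,…,n_m). -/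
/-!
Writing `b_j` as a sum over all subsets `S` of `(-1)^#S q^(j - ∑_S n)`, it is the coefficient of
`x^j` in `∏_l (1 - x^(n_l)) / (1 - q x)`. Deleting an entry `k` divides the product by `1 - x^k`;
for `k = 1` this turns coefficients into their partial sums.
-/

open Finset

/-- The inclusion–exclusion count `b_j` attached to a tuple of positive integers. -/
def bIE (q : ℤ) {m : ℕ} (n : Fin m → ℕ) (j : ℕ) : ℤ :=
  q ^ j + ∑ i ∈ Finset.Icc 1 j, (-1 : ℤ) ^ i *
    ∑ S ∈ (Finset.univ.powersetCard i : Finset (Finset (Fin m))).filter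
        (fun S => ∑ l ∈ S, n l ≤ j),
      q ^ (j - ∑ l ∈ S, n l)

/-- The partial sums `b̂_j = b_0 + ⋯ + b_j`. -/
def bIEhat (q : ℤ) {m : ℕ} (n : Fin m → ℕ) (j : ℕ) : ℤ :=
  ∑ i ∈ Finset.range (j + 1), bIE q n i

theorem Fin.sum_univ_finset_succ {M : Type*} [AddCommMonoid M] {m : ℕ}
    (f : Finset (Fin (m + 1)) → M) :
    ∑ S, f S = ∑ T : Finset (Fin m), f (T.image Fin.succ) +
      ∑ T : Finset (Fin m), f (insert 0 (T.image Fin.succ)) := by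
  have hinj : Set.InjOn (image Fin.succ) (univ : Finset (Fin m)).powerset :=
    (image_injective (Fin.succ_injective m)).injOn
  rw [← powerset_univ, Fin.univ_succ, cons_eq_insert, sum_powerset_insert (by simp),
    map_eq_image]
  simp only [Function.Embedding.coeFn_mk]
  rw [powerset_image, sum_image hinj, sum_image hinj, powerset_univ]

/-- Agrees with `bIE` for positive tuples, where `#S ≤ ∑ l ∈ S, n l` makes the cut-off
`#S ≤ j` of `bIE` automatic. -/
def bIESubsets (q : ℤ) {m : ℕ} (n : Fin m → ℕ) (j : ℕ) : ℤ :=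
  ∑ S : Finset (Fin m),
    if ∑ l ∈ S, n l ≤ j then (-1) ^ #S * q ^ (j - ∑ l ∈ S, n l) else 0

theorem bIE_eq_bIESubsets (q : ℤ) {m : ℕ} (n : Fin m → ℕ) (hn : ∀ i, 1 ≤ n i) (j : ℕ) :
    bIE q n j = bIESubsets q n j := by
  have hcard :
      ∀ S ∈ univ.filter (fun S : Finset (Fin m) => ∑ l ∈ S, n l ≤ j), #S ∈ range (j + 1) := by
    intro S hS
    have := card_nsmul_le_sum S n 1 fun l _ => hn l
    simp only [mem_filter, smul_eq_mul, mul_one] at hS this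
    exact mem_range_succ_iff.2 (this.trans hS.2)
  have hfiber : ∀ i, (univ.filter fun S : Finset (Fin m) => ∑ l ∈ S, n l ≤ j).filter
      (fun S => #S = i) = (univ.powersetCard i).filter (fun S => ∑ l ∈ S, n l ≤ j) := by
    intro i; ext S; simp [and_comm]
  rw [bIESubsets, ← sum_filter, ← sum_fiberwise_of_maps_to hcard,
    sum_range_eq_add_Ico _ (by omega : 0 < j + 1), Ico_add_one_right_eq_Icc, bIE]
  congr 1
  · rw [hfiber, powersetCard_zero, filter_singleton]
    simp
  · refine sum_congr rfl fun i _ => ?_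
    rw [hfiber, mul_sum]
    exact sum_congr rfl fun S hS => by rw [(mem_powersetCard_univ.1 (mem_filter.1 hS).1)]

theorem bIESubsets_fin_succ (q : ℤ) {m : ℕ} (n : Fin (m + 1) → ℕ) (j : ℕ) :
    bIESubsets q n j = bIESubsets q (n ∘ Fin.succ) j -
      if n 0 ≤ j then bIESubsets q (n ∘ Fin.succ) (j - n 0) else 0 := by
  have h0 (T : Finset (Fin m)) : (0 : Fin (m + 1)) ∉ T.image Fin.succ := by
    simp
  have hsum (T : Finset (Fin m)) : ∑ l ∈ T.image Fin.succ, n l = ∑ l ∈ T, (n ∘ Fin.succ) l :=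
    sum_image (Fin.succ_injective m).injOn
  have hcard (T : Finset (Fin m)) : #(T.image Fin.succ) = #T :=
    card_image_of_injective T (Fin.succ_injective m)
  simp only [bIESubsets, Fin.sum_univ_finset_succ, sum_insert (h0 _),
    card_insert_of_notMem (h0 _), hsum, hcard, sub_eq_add_neg]
  congr 1
  split_ifs with hj
  · rw [← sum_neg_distrib]
    refine sum_congr rfl fun T _ => ?_
    by_cases hT : ∑ l ∈ T, (n ∘ Fin.succ) l ≤ j - n 0
    · rw [if_pos (by omega), if_pos hT, Nat.sub_add_eq, pow_succ]
      ring
    · rw [if_neg (by omega), if_neg hT, neg_zero]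
  · rw [neg_zero]
    exact sum_eq_zero fun T _ => if_neg (by omega)

theorem bIEhat_eq_bIE_tail_general (q : ℤ) (m : ℕ) (n : Fin (m + 1) → ℕ)
    (hn : ∀ i, 1 ≤ n i) (h1 : n 0 = 1) (j : ℕ) :
    bIEhat q n j = bIE q (n ∘ Fin.succ) j := by
  set b := bIESubsets q (n ∘ Fin.succ)
  have h_zero : bIESubsets q n 0 = b 0 := by simp [bIESubsets_fin_succ, h1, b]
  have h_succ (i : ℕ) : bIESubsets q n (i + 1) = b (i + 1) - b i := by
    simp [bIESubsets_fin_succ, h1, b]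
  rw [bIE_eq_bIESubsets q (n ∘ Fin.succ) (fun i => hn i.succ), bIEhat,
    sum_congr rfl fun i _ => bIE_eq_bIESubsets q n hn i, sum_range_succ', h_zero]
  simp_rw [h_succ, sum_range_sub]
  ring

/-- If the first entry of the tuple is `1`, the partial sums `b̂_j` for the full tuple equal
the plain counts `b_j` for the tuple with that entry removed. -/
theorem bIEhat_eq_bIE_tail (q : ℤ) (hq : 1 < q) (m : ℕ) (n : Fin (m + 1) → ℕ)
    (hn : ∀ i, 1 ≤ n i) (h1 : n 0 = 1) (j : ℕ) :
    bIEhat q n j = bIE q (n ∘ Fin.succ) j :=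
  bIEhat_eq_bIE_tail_general q m n hn h1 j
end

section
/- Let k be a finite field of even characteristic and fix s ∈ k not of the form r² + r for any r ∈ k. Then the map (h, f) ↦ (h, f + s·h²) is a fixed-point-free involution on the set of pairs of polynomials (h, f) over k with h nonzero; moreover, for any extension k_m of k with m odd, i.e. with s ∉ {r² + r : r ∈ k_m}, and any point α ∈ k_m with h(α) ≠ 0, τ_m(h(α), f(α) + s·h(α)²) = −τ_m(h(α), f(α)), where τ_m(a,b) ∈ {−1,0,1} records whether y² + a y + b has 2, 1 or 0 roots in k_m. -/
open Polynomial

/-- `τ(a,b)` is `1` if `y² + a y + b` has two roots in `K`, `0` if exactly one, `−1` if none. -/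
noncomputable def tauChar (K : Type*) [Field K] (a b : K) : ℤ :=
  if Nat.card {y : K // y ^ 2 + a * y + b = 0} = 2 then 1
  else if Nat.card {y : K // y ^ 2 + a * y + b = 0} = 1 then 0
  else -1

private lemma char2_eq_of_add_eq_zero {K : Type*} [Ring K] [CharP K 2] {x y : K}
    (h : x + y = 0) : x = y := by
  rw [add_eq_zero_iff_eq_neg] at h; rwa [CharTwo.neg_eq] at h

/-- The Artin–Schreier additive hom `z ↦ z² + z` in characteristic 2. -/
private def asHom (K : Type*) [Field K] [CharP K 2] : K →+ K where
  toFun z := z ^ 2 + z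
  map_zero' := by simp
  map_add' x y := by
    show (x + y) ^ 2 + (x + y) = (x ^ 2 + x) + (y ^ 2 + y)
    rw [CharTwo.add_sq]; ring

private lemma asHom_flip {K : Type*} [Field K] [Fintype K] [CharP K 2] (s : K)
    (hs : ∀ r : K, r ^ 2 + r ≠ s) (c : K) :
    (∃ z : K, z ^ 2 + z = c) ↔ ¬ (∃ z : K, z ^ 2 + z = c + s) := by
  constructor
  · rintro ⟨z, hz⟩ ⟨w, hw⟩
    apply hs (z + w)
    calc (z + w) ^ 2 + (z + w) = (z ^ 2 + z) + (w ^ 2 + w) := by rw [CharTwo.add_sq]; ring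
    _ = c + (c + s) := by rw [hz, hw]
    _ = s := by rw [← add_assoc, CharTwo.add_self_eq_zero, zero_add]
  · intro hnot
    by_contra hc
    set φ := asHom K with hφ
    have hker : ((φ.ker : AddSubgroup K) : Set K) = {0, 1} := by
      ext z
      simp only [AddMonoidHom.mem_ker, SetLike.mem_coe, Set.mem_insert_iff,
        Set.mem_singleton_iff]
      show z ^ 2 + z = 0 ↔ _
      constructor
      · intro hz
        have : z * (z + 1) = 0 := by rw [← hz]; ring
        rcases mul_eq_zero.1 this with h | h
        · exact Or.inl h
        · right
          have : z = -1 := by linear_combination h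
          rw [this, CharTwo.neg_eq]
      · rintro (rfl | rfl)
        · ring
        · rw [one_pow, CharTwo.add_self_eq_zero]
    have hkercard : Nat.card φ.ker = 2 := by
      have : Nat.card φ.ker = ((φ.ker : AddSubgroup K) : Set K).ncard := by
        rw [← Nat.card_coe_set_eq]; rfl
      rw [this, hker, Set.ncard_pair (by norm_num : (0 : K) ≠ 1)]
    have hiso : Nat.card (K ⧸ φ.ker) = Nat.card φ.range :=
      Nat.card_congr (QuotientAddGroup.quotientKerEquivRange φ).toEquiv
    have h1 : Nat.card K = Nat.card (K ⧸ φ.ker) * Nat.card φ.ker :=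
      AddSubgroup.card_eq_card_quotient_mul_card_addSubgroup φ.ker
    have h2 : Nat.card K = Nat.card (K ⧸ φ.range) * Nat.card φ.range :=
      AddSubgroup.card_eq_card_quotient_mul_card_addSubgroup φ.range
    have hrpos : 0 < Nat.card φ.range := Nat.card_pos
    have hq2 : Nat.card (K ⧸ φ.range) = 2 := by
      have : Nat.card (K ⧸ φ.range) * Nat.card φ.range = 2 * Nat.card φ.range := by
        rw [← h2, h1, hiso, hkercard, mul_comm]
      exact Nat.eq_of_mul_eq_mul_right hrpos this
    have hcq : (QuotientAddGroup.mk c : K ⧸ φ.range) ≠ 0 := by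
      intro hE
      obtain ⟨z, hz⟩ := (QuotientAddGroup.eq_zero_iff c).1 hE
      exact hc ⟨z, hz⟩
    have hsq : (QuotientAddGroup.mk s : K ⧸ φ.range) ≠ 0 := by
      intro hE
      obtain ⟨z, hz⟩ := (QuotientAddGroup.eq_zero_iff s).1 hE
      exact hs z hz
    have hcs : (QuotientAddGroup.mk c : K ⧸ φ.range) = QuotientAddGroup.mk s := by
      obtain ⟨y, hy⟩ := (Nat.card_eq_two_iff' (0 : K ⧸ φ.range)).1 hq2
      rw [hy.2 _ hcq, hy.2 _ hsq]
    have hmem : s - c ∈ φ.range := by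
      have h' : -s + c ∈ φ.range := QuotientAddGroup.eq.1 hcs.symm
      have := neg_mem h'
      rwa [neg_add, neg_neg, ← sub_eq_add_neg] at this
    have : c + s ∈ φ.range := by
      rwa [sub_eq_add_neg, CharTwo.neg_eq, add_comm] at hmem
    obtain ⟨z, hz⟩ := this
    exact hnot ⟨z, hz⟩

open Classical in
private lemma tauChar_eq {K : Type*} [Field K] [Fintype K] [CharP K 2] {a : K} (b : K)
    (ha : a ≠ 0) :
    tauChar K a b = if ∃ y : K, y ^ 2 + a * y + b = 0 then 1 else -1 := by
  by_cases hex : ∃ y : K, y ^ 2 + a * y + b = 0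
  · obtain ⟨y0, hy0⟩ := hex
    have hset : {y : K | y ^ 2 + a * y + b = 0} = {y0, y0 + a} := by
      ext y
      simp only [Set.mem_setOf_eq, Set.mem_insert_iff, Set.mem_singleton_iff]
      constructor
      · intro hy
        have hfac : (y + y0) * (y + y0 + a) = 0 := by
          have h2 : (2 : K) = 0 := by exact_mod_cast CharP.cast_eq_zero K 2
          linear_combination hy + hy0 + (y * y0 - b) * h2
        rcases mul_eq_zero.1 hfac with hE | hE
        · exact Or.inl (char2_eq_of_add_eq_zero hE)
        · right
          have : y + (y0 + a) = 0 := by rw [← hE]; ring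
          exact char2_eq_of_add_eq_zero this
      · rintro (rfl | rfl)
        · exact hy0
        · calc (y0 + a) ^ 2 + a * (y0 + a) + b
              = (y0 ^ 2 + a * y0 + b) + (a ^ 2 + a ^ 2) := by rw [CharTwo.add_sq]; ring
          _ = 0 := by rw [hy0, CharTwo.add_self_eq_zero, zero_add]
    have hcard : Nat.card {y : K // y ^ 2 + a * y + b = 0} = 2 := by
      have : Nat.card {y : K // y ^ 2 + a * y + b = 0}
          = ({y : K | y ^ 2 + a * y + b = 0}).ncard := (Nat.card_coe_set_eq _).symm ▸ rfl
      rw [this, hset, Set.ncard_pair (by intro hE; exact ha (by linear_combination -hE))]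
    rw [tauChar, hcard, if_pos rfl, if_pos ⟨y0, hy0⟩]
  · have : IsEmpty {y : K // y ^ 2 + a * y + b = 0} := by
      constructor; rintro ⟨y, hy⟩; exact hex ⟨y, hy⟩
    have hcard : Nat.card {y : K // y ^ 2 + a * y + b = 0} = 0 := Nat.card_of_isEmpty
    rw [tauChar, hcard, if_neg (by norm_num), if_neg (by norm_num), if_neg hex]

private lemma exists_root_iff {K : Type*} [Field K] [CharP K 2] {a : K} (b : K)
    (ha : a ≠ 0) :
    (∃ y : K, y ^ 2 + a * y + b = 0) ↔ ∃ z : K, z ^ 2 + z = b / a ^ 2 := by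
  constructor
  · rintro ⟨y, hy⟩
    refine ⟨y / a, ?_⟩
    have hb : y ^ 2 + a * y = b := by
      linear_combination hy - CharTwo.add_self_eq_zero b
    rw [← hb, div_pow]
    field_simp
  · rintro ⟨z, hz⟩
    refine ⟨a * z, ?_⟩
    have : b = (z ^ 2 + z) * a ^ 2 := by rw [hz]; field_simp
    rw [this]; rw [show (a*z)^2 + a*(a*z) + (z^2+z)*a^2 = (z^2+z)*a^2 + (z^2+z)*a^2 by ring,
      CharTwo.add_self_eq_zero]

/-- In even characteristic, with `s` not of the form `r² + r`, the map
`(h,f) ↦ (h, f + s h²)` is a fixed-point-free involution on pairs with `h ≠ 0`, and it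
flips the value of `τ` at any point `α` (in an extension where `s` is still not of the
form `r² + r`) with `h(α) ≠ 0`. -/
theorem artinSchreier_twist (k Km : Type*) [Field k] [Fintype k] [CharP k 2]
    [Field Km] [Fintype Km] [Algebra k Km]
    (s : k) (hsk : ∀ r : k, r ^ 2 + r ≠ s)
    (hsKm : ∀ r : Km, r ^ 2 + r ≠ algebraMap k Km s)
    (h f : Polynomial k) (hh : h ≠ 0)
    (α : Km) (hα : (Polynomial.aeval α) h ≠ 0) :
    ((f + Polynomial.C s * h ^ 2) + Polynomial.C s * h ^ 2 = f) ∧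
    (f + Polynomial.C s * h ^ 2 ≠ f) ∧
    (tauChar Km ((Polynomial.aeval α) h)
        ((Polynomial.aeval α) f + algebraMap k Km s * ((Polynomial.aeval α) h) ^ 2)
      = - tauChar Km ((Polynomial.aeval α) h) ((Polynomial.aeval α) f)) := by
  haveI : CharP Km 2 := charP_of_injective_algebraMap (algebraMap k Km).injective 2
  have hs0 : s ≠ 0 := fun hE => hsk 0 (by rw [hE]; ring)
  refine ⟨?_, ?_, ?_⟩
  · rw [add_assoc, CharTwo.add_self_eq_zero, add_zero]
  · intro hE
    have : Polynomial.C s * h ^ 2 = 0 := by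
      have := add_eq_left.mp hE
      exact this
    exact (mul_ne_zero (Polynomial.C_ne_zero.mpr hs0) (pow_ne_zero 2 hh)) this
  · set a := (Polynomial.aeval α) h with ha'
    set b := (Polynomial.aeval α) f with hb'
    set s' := algebraMap k Km s with hs'
    have hsKm' : ∀ r : Km, r ^ 2 + r ≠ s' := hsKm
    rw [tauChar_eq _ hα, tauChar_eq _ hα]
    have hdiv : (b + s' * a ^ 2) / a ^ 2 = b / a ^ 2 + s' := by
      field_simp
    rcases Classical.em (∃ y : Km, y ^ 2 + a * y + b = 0) with hex | hex
    · have h1 : ¬ ∃ y : Km, y ^ 2 + a * y + (b + s' * a ^ 2) = 0 := by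
        rw [exists_root_iff _ hα] at hex ⊢
        rw [hdiv]
        exact (asHom_flip s' hsKm' _).mp hex
      rw [if_neg h1, if_pos hex]
    · have h1 : ∃ y : Km, y ^ 2 + a * y + (b + s' * a ^ 2) = 0 := by
        rw [exists_root_iff _ hα] at hex ⊢
        rw [hdiv]
        by_contra hno
        exact hex ((asHom_flip s' hsKm' _).mpr hno)
      rw [if_pos h1, if_neg hex]
      norm_num
end

section
/- Let k be a finite field of characteristic 2, and let h, f be polynomials over k. For any irreducible polynomial m over k, the following are equivalent: (a) m divides gcd(h, f′² + f·h′²); (b) there exists a polynomial l over k such that m divides h and m² divides f + h·l + l². -/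
/-!
Write `F = f + h l + l²`. In characteristic 2, `F′ = (f′ + h′ l) + h l′`, and when `m` divides
`h` and `F` we have `(f′ + h′ l)² ≡ f′² + f h′² (mod m)`; as `m` is prime, `m ∣ F′` is then
equivalent to `m ∣ f′² + f h′²`. Since the finite field `k` is perfect, `m` is separable, so
`m² ∣ F` amounts to `m ∣ F` and `m ∣ F′`. Finally, for (a) ⇒ (b), `l` is chosen as a square root
of `f` in the finite, hence perfect, field `k[x]/(m)`, which makes `m ∣ F`.
-/

open Polynomial

theorem EuclideanDomain.dvd_gcd_iff {R : Type*} [EuclideanDomain R] [DecidableEq R] {a b c : R} :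
    a ∣ gcd b c ↔ a ∣ b ∧ a ∣ c :=
  ⟨fun h => ⟨h.trans (gcd_dvd_left b c), h.trans (gcd_dvd_right b c)⟩,
    fun h => dvd_gcd h.1 h.2⟩

namespace Polynomial

theorem Separable.sq_dvd_iff {R : Type*} [CommRing R] {m g : R[X]} (hm : m.Separable) :
    m ^ 2 ∣ g ↔ m ∣ g ∧ m ∣ derivative g := by
  constructor
  · rintro ⟨q, rfl⟩
    refine ⟨(dvd_pow_self m two_ne_zero).mul_right q, ?_⟩
    rw [derivative_mul, derivative_sq]
    exact dvd_add (((dvd_mul_left m _).mul_right _).mul_right _)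
      ((dvd_pow_self m two_ne_zero).mul_right _)
  · rintro ⟨⟨q, rfl⟩, hd⟩
    rw [derivative_mul, dvd_add_left (dvd_mul_right m _)] at hd
    rw [sq]
    exact mul_dvd_mul_left m (hm.dvd_of_dvd_mul_left hd)

theorem exists_dvd_sub_pow_of_irreducible {k : Type*} [Field k] [PerfectField k] (p : ℕ)
    [ExpChar k p] {m : k[X]} (hm : Irreducible m) (f : k[X]) : ∃ l : k[X], m ∣ f - l ^ p := by
  have : Fact (Irreducible m) := ⟨hm⟩
  have : Module.Finite k (AdjoinRoot m) := (AdjoinRoot.powerBasis hm.ne_zero).finite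
  have : PerfectField (AdjoinRoot m) := Algebra.IsAlgebraic.perfectField k
  have : ExpChar (AdjoinRoot m) p := expChar_of_injective_algebraMap (algebraMap k _).injective p
  obtain ⟨a, ha⟩ := surjective_frobenius (AdjoinRoot m) p (AdjoinRoot.mk m f)
  obtain ⟨l, rfl⟩ := AdjoinRoot.mk_surjective a
  refine ⟨l, AdjoinRoot.mk_eq_zero.1 ?_⟩
  rw [map_sub, map_pow, ← ha, frobenius_def, sub_self]

section CharTwo

variable {R : Type*} [CommRing R] [CharP R 2]

theorem derivative_add_mul_add_sq (f h l : R[X]) :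
    derivative (f + h * l + l ^ 2) = derivative f + derivative h * l + h * derivative l := by
  have hC : (C 2 : R[X]) = 0 := by rw [CharTwo.two_eq_zero, C_0]
  rw [derivative_add, derivative_add, derivative_mul, derivative_sq, hC, zero_mul, zero_mul,
    add_zero, add_assoc, add_comm (derivative h * l)]

theorem Prime.dvd_derivative_add_mul_add_sq_iff {m f h l : R[X]} (hm : Prime m) (hmh : m ∣ h)
    (hmF : m ∣ f + h * l + l ^ 2) :
    m ∣ derivative (f + h * l + l ^ 2) ↔ m ∣ derivative f ^ 2 + f * derivative h ^ 2 := by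
  have hdiff : (derivative f + derivative h * l) ^ 2 - (derivative f ^ 2 + f * derivative h ^ 2)
      = derivative h ^ 2 * (f + h * l + l ^ 2) - derivative h ^ 2 * l * h := by
    linear_combination (derivative f * derivative h * l - f * derivative h ^ 2) *
      (CharTwo.two_eq_zero : (2 : R[X]) = 0)
  rw [derivative_add_mul_add_sq, dvd_add_left (hmh.mul_right _),
    ← hm.dvd_pow_iff_dvd two_ne_zero]
  exact dvd_iff_dvd_of_dvd_sub (hdiff ▸ dvd_sub (hmF.mul_left _) (hmh.mul_left _))

end CharTwo

end Polynomial

/-- Reformulation of singularity in characteristic 2 (Lemma `lem-reform`):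
`m ∣ gcd(h, f′² + f h′²)` iff there is `l` with `m ∣ h` and `m² ∣ f + h l + l²`. -/
theorem dvd_gcd_iff_artinSchreier (k : Type*) [Field k] [Fintype k] [CharP k 2]
    [DecidableEq k] (h f : Polynomial k) (m : Polynomial k) (hm : Irreducible m) :
    m ∣ EuclideanDomain.gcd h ((derivative f) ^ 2 + f * (derivative h) ^ 2) ↔
      ∃ l : Polynomial k, m ∣ h ∧ m ^ 2 ∣ f + h * l + l ^ 2 := by
  have hsep : m.Separable := PerfectField.separable_of_irreducible hm
  rw [EuclideanDomain.dvd_gcd_iff]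
  constructor
  · rintro ⟨hmh, hmD⟩
    obtain ⟨l, hl⟩ := exists_dvd_sub_pow_of_irreducible 2 hm f
    rw [CharTwo.sub_eq_add] at hl
    have hmF : m ∣ f + h * l + l ^ 2 := by
      simpa only [add_right_comm] using dvd_add hl (hmh.mul_right l)
    have hmF' := (hm.prime.dvd_derivative_add_mul_add_sq_iff hmh hmF).2 hmD
    exact ⟨l, hmh, hsep.sq_dvd_iff.2 ⟨hmF, hmF'⟩⟩
  · rintro ⟨l, hmh, hmF2⟩
    obtain ⟨hmF, hmF'⟩ := hsep.sq_dvd_iff.1 hmF2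
    exact ⟨hmh, (hm.prime.dvd_derivative_add_mul_add_sq_iff hmh hmF).1 hmF'⟩
end

section
/- Let k be a finite field of characteristic 2 and g ≥ −1. Define Q_g as the set of pairs (h, f) of polynomials over k with h nonzero, deg h ≤ g+1, deg f ≤ 2g+2. Define the relation (h, f) ∼_g (h, f + h l + l²) for polynomials l of degree at most g+1. Then ∼_g is an equivalence relation on Q_g, and each equivalence class has exactly q^{g+2}/2 elements, where q = |k|. -/
/-!
In characteristic 2 the map `℘_h : l ↦ h l + l²` is additive, so `∼_g` is the orbit relation of
the additive group of polynomials of degree `≤ g + 1` acting by `f ↦ f + ℘_h l`, and the class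
of `(h, f)` is a translate of the image of `℘_h`. Since `℘_h l = l (l + h)`, its kernel is
`{0, h}`, so the image has `q^{g+2} / 2` elements.
-/

open Polynomial

section ArtinSchreier

variable {A : Type*} [CommRing A] [CharP A 2]

def artinSchreier (h : A) : A →+ A :=
  AddMonoidHom.mk' (fun l => h * l + l ^ 2) fun a b => by rw [CharTwo.add_sq]; ring

theorem artinSchreier_apply (h l : A) : artinSchreier h l = h * l + l ^ 2 := rfl

theorem artinSchreier_eq_zero_iff [IsDomain A] {h l : A} :
    artinSchreier h l = 0 ↔ l = 0 ∨ l = h := by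
  rw [artinSchreier_apply, show h * l + l ^ 2 = l * (l + h) by ring, mul_eq_zero,
    CharTwo.add_eq_zero]

/-- The paper's `∼_g` is the case where `S` is the polynomials of degree `≤ g + 1`. -/
def ArtinSchreierRel (S : AddSubgroup A) (p p' : A × A) : Prop :=
  p.1 = p'.1 ∧ ∃ l ∈ S, p'.2 = p.2 + artinSchreier p.1 l

theorem artinSchreierRel_equivalence (S : AddSubgroup A) : Equivalence (ArtinSchreierRel S) where
  refl p := ⟨rfl, 0, S.zero_mem, by simp⟩
  symm := by
    rintro ⟨h, f⟩ ⟨h', f'⟩ ⟨rfl, l, hl, rfl⟩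
    exact ⟨rfl, -l, S.neg_mem hl, by simp⟩
  trans := by
    rintro ⟨h, f⟩ ⟨h', f'⟩ ⟨h'', f''⟩ ⟨rfl, l, hl, rfl⟩ ⟨rfl, l', hl', rfl⟩
    exact ⟨rfl, l + l', S.add_mem hl hl', by simp [add_assoc]⟩

theorem card_ker_artinSchreier_comp_subtype [IsDomain A] {S : AddSubgroup A} {h : A}
    (hS : h ∈ S) (h0 : h ≠ 0) : Nat.card ((artinSchreier h).comp S.subtype).ker = 2 := by
  rw [Nat.card_eq_two_iff]
  refine ⟨⟨0, by simp⟩, ⟨⟨h, hS⟩, ?_⟩, ?_, ?_⟩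
  · simp [artinSchreier_eq_zero_iff]
  · simpa [Subtype.ext_iff] using h0.symm
  · ext ⟨⟨l, hl⟩, hker⟩
    simp only [AddMonoidHom.mem_ker, AddMonoidHom.coe_comp, Function.comp_apply,
      AddSubgroup.coe_subtype, artinSchreier_eq_zero_iff] at hker
    rcases hker with rfl | rfl <;> simp

theorem card_range_artinSchreier_comp_subtype_mul_two [IsDomain A] {S : AddSubgroup A}
    [Finite S] {h : A} (hS : h ∈ S) (h0 : h ≠ 0) :
    Nat.card ((artinSchreier h).comp S.subtype).range * 2 = Nat.card S := by
  rw [← card_ker_artinSchreier_comp_subtype hS h0, ← AddSubgroup.index_ker, mul_comm,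
    AddSubgroup.card_mul_index]

def artinSchreierClassEquivRange (S : AddSubgroup A) (h f : A) :
    {p' // ArtinSchreierRel S (h, f) p'} ≃ ((artinSchreier h).comp S.subtype).range where
  toFun p' := ⟨p'.1.2 - f, by
    obtain ⟨-, l, hl, hf⟩ := p'.2
    exact ⟨⟨l, hl⟩, by simp [hf]⟩⟩
  invFun r := ⟨(h, f + r), rfl, by
    obtain ⟨⟨l, hl⟩, hr⟩ := r.2
    exact ⟨l, hl, by simp [← hr]⟩⟩
  left_inv := by
    rintro ⟨⟨h', f'⟩, hh : h = h', -⟩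
    subst hh
    simp
  right_inv r := by simp

theorem card_artinSchreierClass_mul_two [IsDomain A] {S : AddSubgroup A} [Finite S] {h : A}
    (hS : h ∈ S) (h0 : h ≠ 0) (f : A) :
    Nat.card {p' // ArtinSchreierRel S (h, f) p'} * 2 = Nat.card S := by
  rw [Nat.card_congr (artinSchreierClassEquivRange S h f),
    card_range_artinSchreier_comp_subtype_mul_two hS h0]

end ArtinSchreier

namespace Polynomial

variable {R : Type*} [CommRing R]

theorem mem_degreeLT_succ_iff {n : ℕ} {p : R[X]} :
    p ∈ degreeLT R (n + 1) ↔ p.natDegree ≤ n := by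
  rw [degreeLT_succ_eq_degreeLE, mem_degreeLE, natDegree_le_iff_degree_le]

instance [Finite R] (n : ℕ) : Finite (degreeLT R n) :=
  .of_equiv _ (degreeLTEquiv R n).toEquiv.symm

theorem nat_card_degreeLT [Fintype R] (n : ℕ) : Nat.card (degreeLT R n) = Fintype.card R ^ n := by
  rw [Nat.card_congr (degreeLTEquiv R n).toEquiv, Nat.card_fun, Nat.card_eq_fintype_card,
    Nat.card_fin]

theorem natDegree_add_mul_add_sq_le {f h l : R[X]} {n : ℕ} (hf : f.natDegree ≤ 2 * n)
    (hh : h.natDegree ≤ n) (hl : l.natDegree ≤ n) : (f + h * l + l ^ 2).natDegree ≤ 2 * n :=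
  natDegree_add_le_of_degree_le
    (natDegree_add_le_of_degree_le hf (two_mul n ▸ natDegree_mul_le_of_le hh hl))
    (natDegree_pow_le_of_le 2 hl)

theorem artinSchreierRel_degreeLT_succ_iff [CharP R 2] {n : ℕ} {p p' : R[X] × R[X]} :
    ArtinSchreierRel (degreeLT R (n + 1)).toAddSubgroup p p' ↔
      p.1 = p'.1 ∧ ∃ l : R[X], l.natDegree ≤ n ∧ p'.2 = p.2 + p.1 * l + l ^ 2 := by
  simp only [ArtinSchreierRel, Submodule.mem_toAddSubgroup, mem_degreeLT_succ_iff,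
    artinSchreier_apply, add_assoc]

end Polynomial

/-- In even characteristic, the relation `(h,f) ∼ (h, f + h l + l²)` (with `deg l ≤ g+1`) is
an equivalence relation on pairs `(h,f)` with `h ≠ 0`, `deg h ≤ g+1`, `deg f ≤ 2g+2`, and
every equivalence class has exactly `q^{g+2}/2` elements. -/
theorem artinSchreier_equiv_classes (k : Type*) [Field k] [Fintype k] [CharP k 2]
    (g : ℤ) (hg : -1 ≤ g) :
    Equivalence (fun p p' : {p : Polynomial k × Polynomial k //
        p.1 ≠ 0 ∧ p.1.natDegree ≤ (g + 1).toNat ∧ p.2.natDegree ≤ (2 * g + 2).toNat} =>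
      p.1.1 = p'.1.1 ∧ ∃ l : Polynomial k, l.natDegree ≤ (g + 1).toNat ∧
        p'.1.2 = p.1.2 + p.1.1 * l + l ^ 2) ∧
    ∀ p : {p : Polynomial k × Polynomial k //
        p.1 ≠ 0 ∧ p.1.natDegree ≤ (g + 1).toNat ∧ p.2.natDegree ≤ (2 * g + 2).toNat},
      Nat.card {p' : {p : Polynomial k × Polynomial k //
          p.1 ≠ 0 ∧ p.1.natDegree ≤ (g + 1).toNat ∧ p.2.natDegree ≤ (2 * g + 2).toNat} //
        p.1.1 = p'.1.1 ∧ ∃ l : Polynomial k, l.natDegree ≤ (g + 1).toNat ∧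
          p'.1.2 = p.1.2 + p.1.1 * l + l ^ 2} * 2
        = Fintype.card k ^ (g + 2).toNat := by
  set n := (g + 1).toNat
  rw [show (2 * g + 2).toNat = 2 * n by omega, show (g + 2).toNat = n + 1 by omega]
  simp_rw [← artinSchreierRel_degreeLT_succ_iff]
  refine ⟨(artinSchreierRel_equivalence _).comap Subtype.val, ?_⟩
  rintro ⟨⟨h, f⟩, h0, hh, hf⟩
  have hclass : ∀ {p'}, ArtinSchreierRel (degreeLT k (n + 1)).toAddSubgroup (h, f) p' →
      p'.1 ≠ 0 ∧ p'.1.natDegree ≤ n ∧ p'.2.natDegree ≤ 2 * n := by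
    rintro ⟨h', f'⟩ hrel
    obtain ⟨rfl, l, hl, rfl⟩ := artinSchreierRel_degreeLT_succ_iff.1 hrel
    exact ⟨h0, hh, natDegree_add_mul_add_sq_le hf hh hl⟩
  have : Finite (degreeLT k (n + 1)).toAddSubgroup :=
    inferInstanceAs (Finite (degreeLT k (n + 1)))
  rw [Nat.card_congr (Equiv.subtypeSubtypeEquivSubtype hclass),
    card_artinSchreierClass_mul_two (mem_degreeLT_succ_iff.2 hh) h0]
  exact nat_card_degreeLT (n + 1)
end

section
/- Let q ≥ 2 and define b̂_j = ∑_{i=0}^j q^i. Define a sequence A_g for g ≥ −1 by the relations ∑_{j=0}^{g+1} b̂_j · A_{g−j} = J·b̂_{2g+2} for all g ≥ −1, where J = ((q³−q)(q−1))^{-1}·(q−1) = 1/(q³−q). Then A_0 = q/(q²−1) and A_g = q^{2g−1} for all g ≥ 1. -/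
/-- The mass `a_0|_g` of hyperelliptic curves of genus `g` (Example `exa-a0`): the unique
sequence satisfying `∑_{j=0}^{g+1} b̂_j A_{g−j} = b̂_{2g+2}/(q³−q)` has `A_0 = q/(q²−1)` and
`A_g = q^{2g−1}` for `g ≥ 1`, where `b̂_j = 1 + q + ⋯ + q^j`. -/
theorem hyperelliptic_mass (q : ℚ) (hq : 2 ≤ q) (A : ℤ → ℚ)
    (hrel : ∀ g : ℤ, -1 ≤ g →
      ∑ j ∈ Finset.range (g + 2).toNat,
        (∑ i ∈ Finset.range (j + 1), q ^ i) * A (g - j)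
      = (1 / (q ^ 3 - q)) * ∑ i ∈ Finset.range ((2 * g + 2).toNat + 1), q ^ i) :
    A 0 = q / (q ^ 2 - 1) ∧ ∀ g : ℤ, 1 ≤ g → A g = q ^ (2 * g - 1) := by
  have hq0 : q ≠ 0 := by linarith
  have hq1 : q - 1 ≠ 0 := by intro h; nlinarith
  have hq2 : q + 1 ≠ 0 := by intro h; nlinarith
  have hqne1 : q ≠ 1 := by intro h; nlinarith
  have hden : q ^ 3 - q ≠ 0 := by
    have h1 : (0:ℚ) < q := by linarith
    have h2 : (0:ℚ) < q - 1 := by linarith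
    have h3 : (0:ℚ) < q + 1 := by linarith
    have : (0:ℚ) < q * ((q - 1) * (q + 1)) := mul_pos h1 (mul_pos h2 h3)
    intro h; nlinarith
  have hq21 : q ^ 2 - 1 ≠ 0 := by intro h; nlinarith
  -- relation at natural index n (corresponding to g = n - 1)
  have hrelN : ∀ n : ℕ,
      ∑ j ∈ Finset.range (n + 1), (∑ i ∈ Finset.range (j + 1), q ^ i) * A ((n : ℤ) - 1 - j)
      = (1 / (q ^ 3 - q)) * ∑ i ∈ Finset.range (2 * n + 1), q ^ i := by
    intro n
    have h := hrel ((n : ℤ) - 1) (by omega)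
    have e1 : (((n : ℤ) - 1) + 2).toNat = n + 1 := by omega
    have e2 : (2 * ((n : ℤ) - 1) + 2).toNat = 2 * n := by omega
    rw [e1, e2] at h
    convert h using 2
  -- geometric step
  have hgeo : ∀ j : ℕ, ∑ i ∈ Finset.range (j + 2), q ^ i
      = 1 + q * ∑ i ∈ Finset.range (j + 1), q ^ i := by
    intro j
    rw [Finset.sum_range_succ' (fun i => q ^ i) (j + 1), Finset.mul_sum]
    simp [pow_succ, mul_comm, add_comm]
  -- key telescoping identity
  have key : ∀ n : ℕ, ∑ j ∈ Finset.range (n + 2), A ((n : ℤ) - j)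
      = (1 / (q ^ 3 - q)) * (1 + q ^ (2 * n + 2)) := by
    intro n
    have h1 := hrelN (n + 1)
    have h2 := hrelN n
    rw [Finset.sum_range_succ'
      (fun j => (∑ i ∈ Finset.range (j + 1), q ^ i) * A ((↑(n+1) : ℤ) - 1 - j)) (n + 1)] at h1
    have harg : ∀ j : ℕ, ((↑(n+1) : ℤ) - 1 - (↑(j + 1) : ℤ)) = (n : ℤ) - 1 - j := by
      intro j; push_cast; ring
    have harg0 : ((↑(n+1) : ℤ) - 1 - ((0:ℕ) : ℤ)) = (n : ℤ) := by push_cast; ring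
    simp only [harg, harg0] at h1
    have split : ∑ k ∈ Finset.range (n + 1), (∑ i ∈ Finset.range (k + 1 + 1), q ^ i) * A ((n:ℤ) - 1 - k)
        = (∑ k ∈ Finset.range (n + 1), A ((n:ℤ) - 1 - k))
          + q * ∑ k ∈ Finset.range (n + 1), (∑ i ∈ Finset.range (k + 1), q ^ i) * A ((n:ℤ) - 1 - k) := by
      rw [Finset.mul_sum, ← Finset.sum_add_distrib]
      refine Finset.sum_congr rfl fun k _ => ?_
      rw [show k + 1 + 1 = k + 2 from rfl, hgeo k]; ring
    rw [split, h2] at h1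
    -- split the target sum
    rw [Finset.sum_range_succ' (fun j => A ((n:ℤ) - j)) (n + 1)]
    have harg2 : ∀ j : ℕ, ((n:ℤ) - (↑(j + 1) : ℤ)) = (n : ℤ) - 1 - j := by
      intro j; push_cast; ring
    have harg3 : ((n:ℤ) - ((0:ℕ) : ℤ)) = (n : ℤ) := by push_cast; ring
    simp only [harg2, harg3]
    -- evaluate geometric sums
    simp only [geom_sum_eq hqne1] at h1
    have expand : (1 / (q ^ 3 - q)) * ((q ^ (2 * (n+1) + 1) - 1) / (q - 1))
        - q * ((1 / (q ^ 3 - q)) * ((q ^ (2 * n + 1) - 1) / (q - 1)))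
        - (q ^ (0 + 1) - 1) / (q - 1) * A (n:ℤ)
        = (1 / (q ^ 3 - q)) * (1 + q ^ (2 * n + 2)) - A (n:ℤ) := by
      field_simp
      ring
    linear_combination h1 + expand
  -- A (-1) = 1/(q^3-q)
  have hm1 : A (-1) = 1 / (q ^ 3 - q) := by
    have h := hrelN 0
    simpa using h
  have hA0 : A 0 = q / (q ^ 2 - 1) := by
    have h := key 0
    simp [Finset.sum_range_succ] at h
    have : A 0 + A (-1) = (1 / (q ^ 3 - q)) * (1 + q ^ 2) := by
      convert h using 2 ; norm_num
    rw [hm1] at this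
    have : A 0 = (1 / (q ^ 3 - q)) * (1 + q ^ 2) - 1 / (q ^ 3 - q) := by linarith
    rw [this]
    field_simp
    ring
  refine ⟨hA0, ?_⟩
  -- A (m+1) for m : ℕ
  have hAnat : ∀ m : ℕ, A ((m : ℤ) + 1) = q ^ (2 * m + 1) := by
    intro m
    have h1 := key (m + 1)
    have h2 := key m
    rw [Finset.sum_range_succ' (fun j => A ((↑(m+1) : ℤ) - j)) (m + 2)] at h1
    have harg : ∀ j : ℕ, ((↑(m+1) : ℤ) - (↑(j + 1) : ℤ)) = (m : ℤ) - j := by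
      intro j; push_cast; ring
    have harg0 : ((↑(m+1) : ℤ) - ((0:ℕ) : ℤ)) = (m : ℤ) + 1 := by push_cast; ring
    simp only [harg, harg0] at h1
    rw [h2] at h1
    have : A ((m:ℤ) + 1) = (1 / (q ^ 3 - q)) * (1 + q ^ (2 * (m+1) + 2))
        - (1 / (q ^ 3 - q)) * (1 + q ^ (2 * m + 2)) := by linear_combination h1
    rw [this]
    field_simp
    ring
  intro g hg
  obtain ⟨m, rfl⟩ : ∃ m : ℕ, g = (m : ℤ) + 1 := ⟨(g - 1).toNat, by omega⟩
  have := hAnat m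
  rw [this]
  have hexp : (2 * ((m : ℤ) + 1) - 1) = ((2 * m + 1 : ℕ) : ℤ) := by push_cast; ring
  rw [hexp, zpow_natCast]
end

section
/- Let k be a finite field and C a smooth projective curve over k with a separable degree two morphism φ: C → P¹ defined over k. For i ≥ 1 let A(i) denote the set of points of P¹ whose exact field of definition is k_i, let b_i(C_φ) be the number of α ∈ A(i) with |φ^{-1}(α)| = 2 and both preimages defined over k_i, and c_i(C_φ) the number of α ∈ A(i) with |φ^{-1}(α)| = 2 and the preimages not defined over k_i (hence defined over k_{2i} and swapped by Frobenius^i). Then for every n ≥ 1, the trace of Frobenius a_n(C) = 1 + q^n − |C(k_n)| satisfies a_n(C) = ∑_{i | n, 2i ∤ n} (c_i(C_φ) − b_i(C_φ)) + ∑_{i : 2i | n} (−b_i(C_φ) − c_i(C_φ)). -/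
/-!
Count the `FX^[n]`-fixed points fibrewise over the `FY^[n]`-fixed points `y`, grouped by the
exact period `i ∣ n` of `y`. Over such a `y` the map `FX^[i]` permutes the fiber: a ramified
fiber contributes one fixed point and a split one two, while on an inert fiber `FX^[i]` is the
transposition, so `FX^[n] = (FX^[i])^[n / i]` fixes both points or none according as `n / i` is
even or odd. Since `q ^ n + 1` counts every `y` once, the trace is the sum of the defects
`1 - #(fixed points over y)`.
-/

open Finset Function

section

variable {X Y : Type*}

theorem minimalPeriod_eq_iff_of_pos {g : Y → Y} {y : Y} {i : ℕ} (hi : 0 < i) :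
    minimalPeriod g y = i ↔ g^[i] y = y ∧ ∀ j, 0 < j → j < i → g^[j] y ≠ y := by
  constructor
  · rintro rfl
    exact ⟨iterate_minimalPeriod,
      fun j hj hjy => not_isPeriodicPt_of_pos_of_lt_minimalPeriod hj.ne' hjy⟩
  · rintro ⟨hper, hmin⟩
    refine le_antisymm (IsPeriodicPt.minimalPeriod_le hi hper) (not_lt.mp fun hlt => ?_)
    exact hmin _ (IsPeriodicPt.minimalPeriod_pos hi hper) hlt iterate_minimalPeriod

theorem card_subtype_eq_sum_card_fiber (φ : X → Y) [∀ y, Finite {x // φ x = y}]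
    {p : X → Prop} {q : Y → Prop} [Fintype {y // q y}] (hpq : ∀ x, p x → q (φ x)) :
    Nat.card {x // p x} = ∑ y : {y // q y}, Nat.card {x // φ x = y ∧ p x} := by
  have (y : Y) : Finite {x // φ x = y ∧ p x} :=
    Finite.of_injective (fun x => (⟨x.1, x.2.1⟩ : {x // φ x = y}))
      fun _ _ hxy => Subtype.ext (Subtype.mk.inj hxy)
  rw [← Nat.card_sigma]
  exact Nat.card_congr
    { toFun x := ⟨⟨φ x, hpq x x.2⟩, x, rfl, x.2⟩
      invFun s := ⟨s.2, s.2.2.2⟩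
      left_inv _ := rfl
      right_inv := by
        rintro ⟨⟨y, hy⟩, x, hxy, hx⟩
        obtain rfl : φ x = y := hxy
        rfl }

theorem card_subtype_eq_card_filter {p q : Y → Prop} [DecidablePred p] [Fintype {y // q y}]
    (hpq : ∀ y, p y → q y) :
    Nat.card {y // p y} = #{y : {y // q y} | p y} := by
  rw [← Fintype.card_subtype, ← Nat.card_eq_fintype_card]
  exact Nat.card_congr (Equiv.subtypeSubtypeEquivSubtype (hpq _)).symm

theorem minimalPeriod_eq_two_of_card_eq_two {σ : X → X} (hσ : Injective σ)
    (hcard : Nat.card X = 2) {a : X} (ha : σ a ≠ a) (x : X) : minimalPeriod σ x = 2 := by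
  have hmove (z : X) : σ z ≠ z := by
    intro hz
    have hza : z ≠ a := fun h => ha (h ▸ hz)
    have hσa : σ a = z := ((Nat.card_eq_two_iff' a).mp hcard).unique ha hza
    exact hza (hσ (hσa.trans hz.symm)).symm
  have hinv (z : X) : σ (σ z) = z :=
    ((Nat.card_eq_two_iff' (σ z)).mp hcard).unique (hmove (σ z)) (hmove z).symm
  exact minimalPeriod_eq_prime (p := 2) (hinv x) (hmove x)

def IsSplit (φ : X → Y) (f : X → X) (i : ℕ) (y : Y) : Prop :=
  Nat.card {x // φ x = y} = 2 ∧ ∀ x, φ x = y → f^[i] x = x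

def IsInert (φ : X → Y) (f : X → X) (i : ℕ) (y : Y) : Prop :=
  Nat.card {x // φ x = y} = 2 ∧ ¬ ∀ x, φ x = y → f^[i] x = x

variable {f : X → X} {g : Y → Y} {φ : X → Y} {y : Y} {i n : ℕ}

theorem card_fiber_fixed_of_forall (h : ∀ x, φ x = y → f^[n] x = x) :
    Nat.card {x // φ x = y ∧ f^[n] x = x} = Nat.card {x // φ x = y} :=
  Nat.card_congr (Equiv.subtypeEquivRight fun x => and_iff_left_of_imp (h x))

theorem card_fiber_fixed_of_card_eq_one (hφ : Semiconj φ f g) (hy : g^[n] y = y)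
    (hcard : Nat.card {x // φ x = y} = 1) :
    Nat.card {x // φ x = y ∧ f^[n] x = x} = 1 := by
  have := (Nat.card_eq_one_iff_unique.mp hcard).1
  rw [← hcard]
  refine card_fiber_fixed_of_forall fun x hx => ?_
  have hfx : φ (f^[n] x) = y := by rw [(hφ.iterate_right n).eq, hx, hy]
  exact congrArg Subtype.val (Subsingleton.elim (⟨_, hfx⟩ : {x // φ x = y}) ⟨x, hx⟩)

theorem card_fiber_fixed_of_isSplit (hsplit : IsSplit φ f i y) (hin : i ∣ n) :
    Nat.card {x // φ x = y ∧ f^[n] x = x} = 2 := by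
  rw [card_fiber_fixed_of_forall fun x hx => IsPeriodicPt.trans_dvd (hsplit.2 x hx) hin,
    hsplit.1]

theorem iterate_mul_eq_self_iff_of_isInert (hφ : Semiconj φ f g) (hf : Injective f)
    (hy : g^[i] y = y) (hinert : IsInert φ f i y) {x : X} (hx : φ x = y) (m : ℕ) :
    f^[i * m] x = x ↔ 2 ∣ m := by
  obtain ⟨hcard, hmove⟩ := hinert
  push Not at hmove
  obtain ⟨x₀, hx₀, hmove⟩ := hmove
  let σ (z : {x // φ x = y}) : {x // φ x = y} :=
    ⟨f^[i] z, by rw [(hφ.iterate_right i).eq, z.2, hy]⟩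
  have hσ : Injective σ := fun _ _ h => Subtype.ext (hf.iterate i (congrArg Subtype.val h))
  have hσval : Semiconj Subtype.val σ f^[i] := fun _ => rfl
  rw [← minimalPeriod_eq_two_of_card_eq_two hσ hcard (a := ⟨x₀, hx₀⟩)
      (fun h => hmove (congrArg Subtype.val h)) ⟨x, hx⟩,
    ← isPeriodicPt_iff_minimalPeriod_dvd, IsPeriodicPt, IsFixedPt, Subtype.ext_iff,
    (hσval.iterate_right m).eq, iterate_mul]

theorem card_fiber_fixed_of_isInert (hφ : Semiconj φ f g) (hf : Injective f)
    (hy : g^[i] y = y) (hinert : IsInert φ f i y) (hin : i ∣ n) :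
    Nat.card {x // φ x = y ∧ f^[n] x = x} = if 2 * i ∣ n then 2 else 0 := by
  obtain ⟨m, rfl⟩ := hin
  have hi : 0 < i := Nat.pos_of_ne_zero (by rintro rfl; exact hinert.2 fun _ _ => rfl)
  have hfix {x} (hx : φ x = y) := iterate_mul_eq_self_iff_of_isInert hφ hf hy hinert hx m
  simp only [mul_comm 2 i, Nat.mul_dvd_mul_iff_left hi]
  split_ifs with hm
  · rw [card_fiber_fixed_of_forall fun x hx => (hfix hx).mpr hm, hinert.1]
  · have : IsEmpty {x // φ x = y ∧ f^[i * m] x = x} := ⟨fun x => hm ((hfix x.2.1).mp x.2.2)⟩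
    exact Nat.card_of_isEmpty

open scoped Classical in
theorem one_sub_card_fiber_fixed (hφ : Semiconj φ f g) (hf : Injective f)
    (hfib : 1 ≤ Nat.card {x // φ x = y} ∧ Nat.card {x // φ x = y} ≤ 2)
    (hy : g^[i] y = y) (hin : i ∣ n) :
    (1 : ℤ) - Nat.card {x // φ x = y ∧ f^[n] x = x}
      = (if IsInert φ f i y then (if 2 * i ∣ n then -1 else 1) else 0)
        - (if IsSplit φ f i y then 1 else 0) := by
  by_cases hsplit : IsSplit φ f i y
  · rw [card_fiber_fixed_of_isSplit hsplit hin, if_neg fun hinert => hinert.2 hsplit.2,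
      if_pos hsplit]
    norm_num
  by_cases hinert : IsInert φ f i y
  · rw [card_fiber_fixed_of_isInert hφ hf hy hinert hin, if_pos hinert, if_neg hsplit]
    split_ifs <;> norm_num
  have hcard : Nat.card {x // φ x = y} = 1 := by
    have : Nat.card {x // φ x = y} ≠ 2 := fun h2 => by
      by_cases hfix : ∀ x, φ x = y → f^[i] x = x
      exacts [hsplit ⟨h2, hfix⟩, hinert ⟨h2, hfix⟩]
    omega
  rw [card_fiber_fixed_of_card_eq_one hφ (IsPeriodicPt.trans_dvd hy hin) hcard,
    if_neg hinert, if_neg hsplit]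
  norm_num

open scoped Classical in
theorem sum_one_sub_card_fiber_fixed_of_minimalPeriod_eq (hφ : Semiconj φ f g)
    (hf : Injective f)
    (hfib : ∀ y, 1 ≤ Nat.card {x // φ x = y} ∧ Nat.card {x // φ x = y} ≤ 2)
    [Fintype {y // g^[n] y = y}] (hin : i ∣ n) :
    ∑ y ∈ univ.filter fun y : {y // g^[n] y = y} => minimalPeriod g y = i,
        ((1 : ℤ) - Nat.card {x // φ x = y ∧ f^[n] x = x})
      = (if 2 * i ∣ n then -1 else 1) * Nat.card {y // minimalPeriod g y = i ∧ IsInert φ f i y}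
        - Nat.card {y // minimalPeriod g y = i ∧ IsSplit φ f i y} := by
  have hperiodic {P : Y → Prop} (y : Y) (hy : minimalPeriod g y = i ∧ P y) : g^[n] y = y :=
    isPeriodicPt_iff_minimalPeriod_dvd.mpr (hy.1 ▸ hin)
  have hdefect (y : {y // g^[n] y = y}) (hy : minimalPeriod g y = i) :=
    one_sub_card_fiber_fixed hφ hf (hfib y) (hy ▸ iterate_minimalPeriod) hin
  rw [sum_congr rfl fun y hy => hdefect y (mem_filter.mp hy).2, sum_sub_distrib,
    ← sum_filter, ← sum_filter, sum_const, sum_const, filter_filter, filter_filter,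
    card_subtype_eq_card_filter hperiodic, card_subtype_eq_card_filter hperiodic]
  simp [mul_comm]

end

theorem trace_from_double_cover_general (X Y : Type*) (FX : X ≃ X) (FY : Y ≃ Y) (φ : X → Y)
    (q : ℕ)
    (hcomm : ∀ x, φ (FX x) = FY (φ x))
    (hfib : ∀ y : Y, 1 ≤ Nat.card {x : X // φ x = y} ∧ Nat.card {x : X // φ x = y} ≤ 2)
    (hfin : ∀ i : ℕ, 1 ≤ i → Finite {y : Y // (⇑FY)^[i] y = y})
    (hY : ∀ i : ℕ, 1 ≤ i → Nat.card {y : Y // (⇑FY)^[i] y = y} = q ^ i + 1)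
    (A : ℕ → Set Y)
    (hA : ∀ i, A i = {y : Y | (⇑FY)^[i] y = y ∧ ∀ j, 0 < j → j < i → (⇑FY)^[j] y ≠ y})
    (b c : ℕ → ℕ)
    (hb : ∀ i, b i = Nat.card {y : Y // y ∈ A i ∧ Nat.card {x : X // φ x = y} = 2 ∧
      ∀ x : X, φ x = y → (⇑FX)^[i] x = x})
    (hc : ∀ i, c i = Nat.card {y : Y // y ∈ A i ∧ Nat.card {x : X // φ x = y} = 2 ∧
      ¬ ∀ x : X, φ x = y → (⇑FX)^[i] x = x})
    (n : ℕ) (hn : 1 ≤ n) :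
    (1 + (q : ℤ) ^ n) - (Nat.card {x : X // (⇑FX)^[n] x = x} : ℤ)
      = ∑ i ∈ n.divisors.filter (fun i => ¬ (2 * i ∣ n)), ((c i : ℤ) - (b i : ℤ))
        + ∑ i ∈ n.divisors.filter (fun i => 2 * i ∣ n), (-(b i : ℤ) - (c i : ℤ)) := by
  classical
  have hφ : Semiconj φ FX FY := hcomm
  have := hfin n hn
  have := Fintype.ofFinite {y // FY^[n] y = y}
  have (y : Y) : Finite {x // φ x = y} := (Nat.card_pos_iff.mp (hfib y).1).2
  have hA' (i : ℕ) (hi : 0 < i) : A i = {y | minimalPeriod FY y = i} := by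
    rw [hA]; ext; exact (minimalPeriod_eq_iff_of_pos hi).symm
  have hfixed (x : X) (hx : FX^[n] x = x) : FY^[n] (φ x) = φ x := by
    rw [← (hφ.iterate_right n).eq, hx]
  calc (1 + (q : ℤ) ^ n) - Nat.card {x // FX^[n] x = x}
      = ∑ y : {y // FY^[n] y = y}, ((1 : ℤ) - Nat.card {x // φ x = y ∧ FX^[n] x = x}) := by
        rw [card_subtype_eq_sum_card_fiber φ (q := fun y => FY^[n] y = y) hfixed,
          sum_sub_distrib, sum_const, card_univ, ← Nat.card_eq_fintype_card, hY n hn]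
        push_cast; ring
    _ = ∑ i ∈ n.divisors,
          ∑ y ∈ univ.filter fun y : {y // FY^[n] y = y} => minimalPeriod FY y = i,
            ((1 : ℤ) - Nat.card {x // φ x = y ∧ FX^[n] x = x}) :=
        (sum_fiberwise_of_maps_to (fun y _ => Nat.mem_divisors.mpr
          ⟨IsPeriodicPt.minimalPeriod_dvd y.2, Nat.one_le_iff_ne_zero.mp hn⟩) _).symm
    _ = ∑ i ∈ n.divisors, ((if 2 * i ∣ n then -1 else 1) * (c i : ℤ) - b i) :=
        sum_congr rfl fun i hi => by
          rw [hb, hc, hA' i (Nat.pos_of_mem_divisors hi)]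
          exact sum_one_sub_card_fiber_fixed_of_minimalPeriod_eq hφ FX.injective hfib
            (Nat.dvd_of_mem_divisors hi)
    _ = _ := by
        rw [add_comm, ← sum_ite]
        exact sum_congr rfl fun i _ => by split_ifs <;> ring

/-- Trace of Frobenius of a degree-two cover `φ : X → Y` of the projective line in terms of
the counts `b_i`, `c_i` of unramified points of exact degree `i` with both preimages
rational, respectively conjugate. -/
theorem trace_from_double_cover (X Y : Type*) (FX : X ≃ X) (FY : Y ≃ Y) (φ : X → Y)
    (q : ℕ) (hq : 2 ≤ q)
    (hcomm : ∀ x, φ (FX x) = FY (φ x))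
    (hfib : ∀ y : Y, 1 ≤ Nat.card {x : X // φ x = y} ∧ Nat.card {x : X // φ x = y} ≤ 2)
    (hfin : ∀ i : ℕ, 1 ≤ i → Finite {y : Y // (⇑FY)^[i] y = y})
    (hY : ∀ i : ℕ, 1 ≤ i → Nat.card {y : Y // (⇑FY)^[i] y = y} = q ^ i + 1)
    (A : ℕ → Set Y)
    (hA : ∀ i, A i = {y : Y | (⇑FY)^[i] y = y ∧ ∀ j, 0 < j → j < i → (⇑FY)^[j] y ≠ y})
    (b c : ℕ → ℕ)
    (hb : ∀ i, b i = Nat.card {y : Y // y ∈ A i ∧ Nat.card {x : X // φ x = y} = 2 ∧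
      ∀ x : X, φ x = y → (⇑FX)^[i] x = x})
    (hc : ∀ i, c i = Nat.card {y : Y // y ∈ A i ∧ Nat.card {x : X // φ x = y} = 2 ∧
      ¬ ∀ x : X, φ x = y → (⇑FX)^[i] x = x})
    (n : ℕ) (hn : 1 ≤ n) :
    (1 + (q : ℤ) ^ n) - (Nat.card {x : X // (⇑FX)^[n] x = x} : ℤ)
      = ∑ i ∈ n.divisors.filter (fun i => ¬ (2 * i ∣ n)), ((c i : ℤ) - (b i : ℤ))
        + ∑ i ∈ n.divisors.filter (fun i => 2 * i ∣ n), (-(b i : ℤ) - (c i : ℤ)) :=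
  trace_from_double_cover_general X Y FX FY φ q hcomm hfib hfin hY A hA b c hb hc n hn
end

section
/- Let q ≥ 2, let n_1,…,n_m be positive integers with n = ∑ n_i, and let b̂_j (j ≥ −1) be defined by b̂_{−1} = 0 and b̂_j = ∑_{i=0}^{j} b_i where b_j = q^j + ∑_{i=1}^j (−1)^i ∑_{1 ≤ m_1<…<m_i ≤ m, ∑ n_{m_l} ≤ j} q^{j − ∑ n_{m_l}}. Then for every j, b̂_j − q·b̂_{j−1} equals the coefficient of q^{n−1−j} in the polynomial ∏_{i=1}^m (q^{n_i} − 1) / (q − 1); in particular b̂_j − q·b̂_{j−1} = 0 for j ≥ n, and consequently b̂_j = q^{j+1−n}·b̂_{n−1} for all j ≥ n − 1. -/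
open Polynomial Finset

/-- The inclusion–exclusion count `b_j`, as a polynomial in the variable `q = X`. -/
noncomputable def bIEpoly {m : ℕ} (n : Fin m → ℕ) (j : ℕ) : Polynomial ℤ :=
  X ^ j + ∑ i ∈ Finset.Icc 1 j, (-1 : Polynomial ℤ) ^ i *
    ∑ S ∈ (Finset.univ.powersetCard i : Finset (Finset (Fin m))).filter
        (fun S => ∑ l ∈ S, n l ≤ j),
      X ^ (j - ∑ l ∈ S, n l)

lemma bIEpoly_eq {m : ℕ} (n : Fin m → ℕ) (hn : ∀ i, 1 ≤ n i) (j : ℕ) :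
    bIEpoly n j = ∑ S ∈ (Finset.univ.powerset : Finset (Finset (Fin m))).filter
        (fun S => ∑ l ∈ S, n l ≤ j),
      (-1 : Polynomial ℤ) ^ S.card * X ^ (j - ∑ l ∈ S, n l) := by
  classical
  set T : ℕ → Polynomial ℤ := fun i => (-1 : Polynomial ℤ) ^ i *
    ∑ S ∈ (Finset.univ.powersetCard i : Finset (Finset (Fin m))).filter
        (fun S => ∑ l ∈ S, n l ≤ j), X ^ (j - ∑ l ∈ S, n l) with hT
  have hT0 : T 0 = X ^ j := by
    simp [hT, Finset.powersetCard_zero, Finset.filter_singleton]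
  have hTbig : ∀ i, m < i → T i = 0 := by
    intro i hi
    have : (Finset.univ.powersetCard i : Finset (Finset (Fin m))) = ∅ := by
      rw [Finset.powersetCard_eq_empty]
      simpa using hi
    simp [hT, this]
  have hTj : ∀ i, j < i → T i = 0 := by
    intro i hi
    have : ((Finset.univ.powersetCard i : Finset (Finset (Fin m))).filter
        (fun S => ∑ l ∈ S, n l ≤ j)) = ∅ := by
      rw [Finset.filter_eq_empty_iff]
      intro S hS hle
      rw [Finset.mem_powersetCard] at hS
      have : i ≤ ∑ l ∈ S, n l := by
        calc i = S.card := hS.2.symm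
        _ = ∑ l ∈ S, 1 := by simp
        _ ≤ ∑ l ∈ S, n l := Finset.sum_le_sum fun l _ => hn l
      omega
    simp [hT, this]
  have key : ∀ K : ℕ, m ≤ K → j ≤ K →
      bIEpoly n j = ∑ i ∈ Finset.range (K + 1), T i := by
    intro K hmK hjK
    have hins : Finset.range (K + 1) = insert 0 (Finset.Icc 1 K) := by
      ext x; simp [Finset.mem_range, Finset.mem_Icc]; omega
    rw [hins, Finset.sum_insert (by simp), hT0]
    unfold bIEpoly
    congr 1
    apply Finset.sum_subset
    · intro x hx; simp at hx ⊢; omega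
    · intro x hx hnx
      simp only [Finset.mem_Icc] at hx hnx
      exact hTj x (by omega)
  rw [key (m + j) (by omega) (by omega)]
  rw [← Finset.sum_fiberwise_of_maps_to (g := Finset.card)
      (t := Finset.range (m + j + 1)) ?_ ]
  · apply Finset.sum_congr rfl
    intro i _
    have hfil : ((Finset.univ.powerset : Finset (Finset (Fin m))).filter
          (fun S => ∑ l ∈ S, n l ≤ j)).filter (fun S => S.card = i)
        = (Finset.univ.powersetCard i : Finset (Finset (Fin m))).filter
          (fun S => ∑ l ∈ S, n l ≤ j) := by
      rw [Finset.powersetCard_eq_filter, Finset.filter_comm]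
    rw [hfil, hT]
    dsimp only
    rw [Finset.mul_sum]
    apply Finset.sum_congr rfl
    intro S hS
    simp only [Finset.mem_filter, Finset.mem_powersetCard] at hS
    rw [hS.1.2]
  · intro S hS
    simp only [Finset.mem_filter, Finset.mem_powerset] at hS
    rw [Finset.mem_range]
    have := Finset.card_le_card hS.1
    simp only [Finset.card_univ, Fintype.card_fin] at this
    omega

def cIE {m : ℕ} (n : Fin m → ℕ) (k : ℕ) : ℤ :=
  ∑ S ∈ (Finset.univ.powerset : Finset (Finset (Fin m))).filter
      (fun S => ∑ l ∈ S, n l = k), (-1 : ℤ) ^ S.card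

lemma bIEpoly_succ_sub {m : ℕ} (n : Fin m → ℕ) (hn : ∀ i, 1 ≤ n i) (j : ℕ) :
    bIEpoly n (j+1) - X * bIEpoly n j = C (cIE n (j+1)) := by
  classical
  rw [bIEpoly_eq n hn (j+1), bIEpoly_eq n hn j, Finset.mul_sum]
  have h1 : ∀ S ∈ ((Finset.univ.powerset : Finset (Finset (Fin m))).filter
      (fun S => ∑ l ∈ S, n l ≤ j)),
      X * ((-1 : Polynomial ℤ)^S.card * X^(j - ∑ l ∈ S, n l))
        = (-1 : Polynomial ℤ)^S.card * X^((j+1) - ∑ l ∈ S, n l) := by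
    intro S hS
    simp only [Finset.mem_filter] at hS
    rw [mul_left_comm, ← pow_succ']
    congr 2
    omega
  rw [Finset.sum_congr rfl h1]
  have hsub : ((Finset.univ.powerset : Finset (Finset (Fin m))).filter
      (fun S => ∑ l ∈ S, n l ≤ j))
      ⊆ (Finset.univ.powerset : Finset (Finset (Fin m))).filter
        (fun S => ∑ l ∈ S, n l ≤ j+1) := by
    intro S hS; simp only [Finset.mem_filter] at hS ⊢; exact ⟨hS.1, by omega⟩
  rw [← Finset.sum_sdiff_eq_sub hsub]
  have hsd : ((Finset.univ.powerset : Finset (Finset (Fin m))).filter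
      (fun S => ∑ l ∈ S, n l ≤ j+1))
      \ ((Finset.univ.powerset : Finset (Finset (Fin m))).filter
        (fun S => ∑ l ∈ S, n l ≤ j))
      = (Finset.univ.powerset : Finset (Finset (Fin m))).filter
        (fun S => ∑ l ∈ S, n l = j+1) := by
    ext S; simp only [Finset.mem_sdiff, Finset.mem_filter, Finset.mem_powerset,
      Finset.subset_univ, true_and, not_le]
    omega
  rw [hsd, cIE, map_sum]
  apply Finset.sum_congr rfl
  intro S hS
  simp only [Finset.mem_filter] at hS
  rw [hS.2]
  simp

lemma cIE_zero {m : ℕ} (n : Fin m → ℕ) (hn : ∀ i, 1 ≤ n i) : cIE n 0 = 1 := by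
  classical
  rw [cIE]
  have h : ((Finset.univ.powerset : Finset (Finset (Fin m))).filter
      (fun S => ∑ l ∈ S, n l = 0)) = {∅} := by
    ext S
    simp only [Finset.mem_filter, Finset.mem_powerset, Finset.subset_univ, true_and,
      Finset.mem_singleton]
    constructor
    · intro h
      rw [Finset.sum_eq_zero_iff] at h
      ext x
      simp only [Finset.notMem_empty, iff_false]
      intro hx
      have h1 := hn x
      have h2 := h x hx
      omega
    · intro h; subst h; simp
  rw [h]
  simp

lemma coeff_Q {m : ℕ} (n : Fin m → ℕ) (k : ℕ) :
    (∏ i, (1 - X^(n i) : Polynomial ℤ)).coeff k = cIE n k := by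
  classical
  have hexp : (∏ i, (1 - X^(n i) : Polynomial ℤ))
      = ∑ t ∈ (Finset.univ.powerset : Finset (Finset (Fin m))),
          (-1 : Polynomial ℤ)^t.card * X^(∑ l ∈ t, n l) := by
    have h := Finset.prod_add (fun i => (-X^(n i) : Polynomial ℤ))
      (fun _ => (1 : Polynomial ℤ)) Finset.univ
    simp only [Finset.prod_const_one, mul_one] at h
    calc ∏ i, (1 - X^(n i) : Polynomial ℤ) = ∏ i, ((-X^(n i)) + 1) := by
          apply Finset.prod_congr rfl; intros; ring
      _ = ∑ t ∈ Finset.univ.powerset, ∏ i ∈ t, (-X^(n i) : Polynomial ℤ) := h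
      _ = _ := by
          apply Finset.sum_congr rfl
          intro t _
          calc ∏ i ∈ t, (-X^(n i) : Polynomial ℤ) = ∏ i ∈ t, ((-1) * X^(n i)) := by
                apply Finset.prod_congr rfl; intros; ring
            _ = (-1 : Polynomial ℤ)^t.card * X^(∑ l ∈ t, n l) := by
                rw [Finset.prod_mul_distrib, Finset.prod_const, Finset.prod_pow_eq_pow_sum]
  rw [hexp, Polynomial.finset_sum_coeff]
  have hterm : ∀ t : Finset (Fin m),
      ((-1 : Polynomial ℤ)^t.card * X^(∑ l ∈ t, n l)).coeff k
        = if ∑ l ∈ t, n l = k then (-1 : ℤ)^t.card else 0 := by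
    intro t
    have h : ((-1 : Polynomial ℤ)^t.card) = C ((-1 : ℤ)^t.card) := by simp
    rw [h, Polynomial.coeff_C_mul, Polynomial.coeff_X_pow, mul_ite, mul_one, mul_zero]
    simp [eq_comm]
  rw [Finset.sum_congr rfl (fun t _ => hterm t), cIE, Finset.sum_filter]

lemma telescopeP (P R : Polynomial ℤ) (h : P = (X - 1) * R) (j : ℕ) :
    ∑ k ∈ Finset.range (j+1), P.coeff k = - R.coeff j := by
  induction j with
  | zero => simp [h, Polynomial.mul_coeff_zero]
  | succ j ih =>
    rw [Finset.sum_range_succ, ih]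
    have h2 : ((X - 1 : Polynomial ℤ) * R).coeff (j+1) = R.coeff j - R.coeff (j+1) := by
      rw [sub_mul, one_mul, Polynomial.coeff_sub, Polynomial.coeff_X_mul]
    rw [h, h2]
    ring

lemma natDegree_Xn (k : ℕ) : (X^k - 1 : Polynomial ℤ).natDegree = k := by
  rw [← Polynomial.C_1]
  exact Polynomial.natDegree_X_pow_sub_C

lemma monic_Xn {k : ℕ} (hk : 1 ≤ k) : (X^k - 1 : Polynomial ℤ).Monic := by
  rw [← Polynomial.C_1]
  exact Polynomial.monic_X_pow_sub_C _ (by omega)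

lemma reflect_prod {m : ℕ} (n : Fin m → ℕ) (hn : ∀ i, 1 ≤ n i) (s : Finset (Fin m)) :
    Polynomial.reflect (∑ i ∈ s, n i) (∏ i ∈ s, (X^(n i) - 1 : Polynomial ℤ))
      = ∏ i ∈ s, (1 - X^(n i) : Polynomial ℤ) := by
  classical
  induction s using Finset.induction_on with
  | empty => simp [Polynomial.reflect_one]
  | @insert a s ha ih =>
    rw [Finset.sum_insert ha, Finset.prod_insert ha, Finset.prod_insert ha]
    rw [Polynomial.reflect_mul _ _ (le_of_eq (natDegree_Xn (n a)))
      (le_of_eq (by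
        rw [Polynomial.natDegree_prod _ _ (fun i _ => (monic_Xn (hn i)).ne_zero)]
        exact Finset.sum_congr rfl fun i _ => natDegree_Xn (n i)))]
    rw [ih]
    congr 1
    rw [Polynomial.reflect_sub, Polynomial.reflect_one, Polynomial.reflect_monomial,
      Polynomial.revAt_le (le_refl _), Nat.sub_self, pow_zero]

lemma hat_diff {m : ℕ} (n : Fin m → ℕ) (hn : ∀ i, 1 ≤ n i) (j : ℕ) :
    (∑ i ∈ Finset.range (j+1), bIEpoly n i) - X * (∑ i ∈ Finset.range j, bIEpoly n i)
      = C (∑ k ∈ Finset.range (j+1), cIE n k) := by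
  induction j with
  | zero =>
    have h0 : bIEpoly n 0 = 1 := by simp [bIEpoly]
    simp [h0, cIE_zero n hn]
  | succ j ih =>
    have key : (∑ i ∈ Finset.range (j+1+1), bIEpoly n i)
        - X * (∑ i ∈ Finset.range (j+1), bIEpoly n i)
        = ((∑ i ∈ Finset.range (j+1), bIEpoly n i)
            - X * (∑ i ∈ Finset.range j, bIEpoly n i))
          + (bIEpoly n (j+1) - X * bIEpoly n j) := by
      rw [Finset.sum_range_succ (fun i => bIEpoly n i) (j+1),
        Finset.sum_range_succ (fun i => bIEpoly n i) j]
      ring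
    rw [key, ih, bIEpoly_succ_sub n hn j, ← map_add, ← Finset.sum_range_succ]

/-- `b̂_j − q·b̂_{j−1}` equals the coefficient of `q^{n−1−j}` in `∏ (q^{n_i} − 1)/(q − 1)`;
in particular it vanishes for `j ≥ n`, so `b̂_j = q^{j+1−n}·b̂_{n−1}` for `j ≥ n−1`. -/
theorem bhat_difference_coeff {m : ℕ} (hm : 0 < m) (n : Fin m → ℕ) (hn : ∀ i, 1 ≤ n i) :
    (∀ j : ℕ, j ≤ (∑ i, n i) - 1 →
      (∑ i ∈ Finset.range (j + 1), bIEpoly n i) - X * (∑ i ∈ Finset.range j, bIEpoly n i)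
        = C (((∏ i, (X ^ (n i) - 1 : Polynomial ℤ)) /ₘ (X - 1)).coeff
            ((∑ i, n i) - 1 - j))) ∧
    (∀ j : ℕ, (∑ i, n i) ≤ j →
      (∑ i ∈ Finset.range (j + 1), bIEpoly n i) - X * (∑ i ∈ Finset.range j, bIEpoly n i)
        = 0) ∧
    (∀ j : ℕ, (∑ i, n i) - 1 ≤ j →
      (∑ i ∈ Finset.range (j + 1), bIEpoly n i)
        = X ^ (j + 1 - ∑ i, n i) * (∑ i ∈ Finset.range (∑ i, n i), bIEpoly n i)) := by
  classical
  set N : ℕ := ∑ i, n i with hNdef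
  set P : Polynomial ℤ := ∏ i, (X ^ (n i) - 1 : Polynomial ℤ) with hPdef
  set R : Polynomial ℤ := P /ₘ (X - 1) with hRdef
  have hN1 : 1 ≤ N := by
    calc 1 ≤ m := hm
    _ = ∑ _i : Fin m, 1 := by simp
    _ ≤ N := Finset.sum_le_sum fun i _ => hn i
  have hmonic1 : (X - 1 : Polynomial ℤ).Monic := by
    simpa using monic_X_sub_C (1 : ℤ)
  have hdegP : P.natDegree = N := by
    rw [hPdef, Polynomial.natDegree_prod _ _ (fun i _ => (monic_Xn (hn i)).ne_zero)]
    exact Finset.sum_congr rfl fun i _ => natDegree_Xn (n i)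
  have hdvd : (X - 1 : Polynomial ℤ) ∣ P := by
    refine dvd_trans ?_ (Finset.dvd_prod_of_mem _ (Finset.mem_univ (⟨0, hm⟩ : Fin m)))
    simpa using sub_dvd_pow_sub_pow (X : Polynomial ℤ) 1 (n ⟨0, hm⟩)
  have hPR : P = (X - 1) * R := by
    conv_lhs => rw [← Polynomial.modByMonic_add_div P (X - 1)]
    rw [(Polynomial.modByMonic_eq_zero_iff_dvd hmonic1).mpr hdvd, zero_add]
  have hdegR : R.natDegree = N - 1 := by
    rw [hRdef, Polynomial.natDegree_divByMonic _ hmonic1, hdegP]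
    have : (X - 1 : Polynomial ℤ).natDegree = 1 := by
      simpa using natDegree_X_sub_C (1 : ℤ)
    rw [this]
  have hQP : (∏ i, (1 - X ^ (n i) : Polynomial ℤ)) = (-1) ^ m * P := by
    have h1 : P = (-1) ^ m * ∏ i, (1 - X ^ (n i) : Polynomial ℤ) := by
      rw [hPdef]
      rw [show ((-1 : Polynomial ℤ) ^ m) = ∏ _i : Fin m, (-1 : Polynomial ℤ) by simp,
        ← Finset.prod_mul_distrib]
      apply Finset.prod_congr rfl
      intros; ring
    rw [h1, ← mul_assoc, ← mul_pow]
    norm_num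
  have hreflP : Polynomial.reflect N P = (-1) ^ m * P := by
    have h := reflect_prod n hn Finset.univ
    rw [← hNdef, ← hPdef] at h
    rw [h, hQP]
  have hreflR : Polynomial.reflect (N - 1) R = (-1) ^ (m + 1) * R := by
    have h1 : Polynomial.reflect N P
        = Polynomial.reflect 1 (X - 1) * Polynomial.reflect (N - 1) R := by
      calc Polynomial.reflect N P = Polynomial.reflect (1 + (N - 1)) ((X - 1) * R) := by
            rw [show 1 + (N - 1) = N by omega, ← hPR]
        _ = _ := Polynomial.reflect_mul _ _
            (by simpa using natDegree_X_sub_C_le (1 : ℤ)) (le_of_eq hdegR)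
    have h2 : Polynomial.reflect 1 (X - 1 : Polynomial ℤ) = -(X - 1) := by
      have hX : Polynomial.reflect 1 (X : Polynomial ℤ) = 1 := by
        rw [← pow_one (X : Polynomial ℤ), Polynomial.reflect_monomial,
          Polynomial.revAt_le (le_refl 1), Nat.sub_self, pow_zero]
      rw [Polynomial.reflect_sub, Polynomial.reflect_one, hX]
      ring
    have h3 := h1
    rw [hreflP, h2, hPR] at h3
    have hXne : (X - 1 : Polynomial ℤ) ≠ 0 := hmonic1.ne_zero
    apply mul_left_cancel₀ hXne
    calc (X - 1) * Polynomial.reflect (N - 1) R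
        = -(-(X - 1) * Polynomial.reflect (N - 1) R) := by ring
      _ = -((-1) ^ m * ((X - 1) * R)) := by rw [← h3]
      _ = (X - 1) * ((-1) ^ (m + 1) * R) := by ring
  have hsum : ∀ j : ℕ, (∑ k ∈ Finset.range (j + 1), cIE n k) = (-1) ^ (m + 1) * R.coeff j := by
    intro j
    have h1 : ∀ k, cIE n k = (-1 : ℤ) ^ m * P.coeff k := by
      intro k
      rw [← coeff_Q n k]
      have := congrArg (fun p => Polynomial.coeff p k) hQP
      rw [this, show ((-1 : Polynomial ℤ) ^ m) = C ((-1 : ℤ) ^ m) by simp,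
        Polynomial.coeff_C_mul]
    calc (∑ k ∈ Finset.range (j + 1), cIE n k)
        = (-1 : ℤ) ^ m * ∑ k ∈ Finset.range (j + 1), P.coeff k := by
          rw [Finset.mul_sum]; exact Finset.sum_congr rfl fun k _ => h1 k
      _ = (-1 : ℤ) ^ m * (- R.coeff j) := by rw [telescopeP P R hPR j]
      _ = (-1) ^ (m + 1) * R.coeff j := by ring
  have part1 : ∀ j : ℕ, j ≤ N - 1 →
      (∑ i ∈ Finset.range (j + 1), bIEpoly n i) - X * (∑ i ∈ Finset.range j, bIEpoly n i)
        = C (R.coeff (N - 1 - j)) := by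
    intro j hj
    rw [hat_diff n hn j, hsum j]
    congr 1
    have := congrArg (fun p => Polynomial.coeff p j) hreflR
    rw [Polynomial.coeff_reflect, Polynomial.revAt_le hj,
      show ((-1 : Polynomial ℤ) ^ (m + 1)) = C ((-1 : ℤ) ^ (m + 1)) by simp,
      Polynomial.coeff_C_mul] at this
    rw [← this]
  have part2 : ∀ j : ℕ, N ≤ j →
      (∑ i ∈ Finset.range (j + 1), bIEpoly n i) - X * (∑ i ∈ Finset.range j, bIEpoly n i)
        = 0 := by
    intro j hj
    rw [hat_diff n hn j, hsum j]
    rw [Polynomial.coeff_eq_zero_of_natDegree_lt (by omega : R.natDegree < j)]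
    simp
  refine ⟨part1, part2, ?_⟩
  intro j hj
  induction j, hj using Nat.le_induction with
  | base =>
    rw [show N - 1 + 1 = N by omega]
    simp
  | succ j hj' ih =>
    have h2 := part2 (j + 1) (by omega)
    rw [sub_eq_zero] at h2
    rw [h2, ih, ← mul_assoc, ← pow_succ']
    congr 2
    omega
end
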